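/- arXiv:2604.03200 — 3 statements merged into one kernel-verified Lean document; each statement's English description precedes it below -/
import Mathlib

section
/- Let h : X → ℝ be a function on the state space of a discrete-time system x(t+1) = f(x(t), u(t)), and suppose there exists a class-K function α with α(s) < s for all s > 0 such that for every state x(t) ∈ X there is an admissible input u(t) with h(f(x(t),u(t))) - h(x(t)) ≥ -α(h(x(t))). Then the set S = {x ∈ X : h(x) ≥ 0} is forward invariant: if x(0) ∈ S, then x(t) ∈ S for all t ≥ 0 under a control sequence satisfying the condition. -/
lemma le_self_of_lt_self_of_map_zero {α : ℝ → ℝ} (hα0 : α 0 = 0)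
    (hαlt : ∀ s > (0:ℝ), α s < s) {s : ℝ} (hs : 0 ≤ s) : α s ≤ s := by
  rcases hs.eq_or_lt with rfl | hpos
  · exact hα0.le
  · exact (hαlt s hpos).le

lemma nonneg_of_sub_le_succ {α : ℝ → ℝ} (hα : ∀ s, 0 ≤ s → α s ≤ s) {a : ℕ → ℝ}
    (hstep : ∀ t, a t - α (a t) ≤ a (t + 1)) (h0 : 0 ≤ a 0) (t : ℕ) : 0 ≤ a t := by
  induction t with
  | zero => exact h0
  | succ n ih => linarith [hstep n, hα (a n) ih]

theorem stmt_0_general {X : Type*} (h : X → ℝ) (α : ℝ → ℝ)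
    (hα0 : α 0 = 0)
    (hαlt : ∀ s > (0:ℝ), α s < s)
    (x : ℕ → X)
    (hsat : ∀ t, h (x (t + 1)) - h (x t) ≥ -α (h (x t)))
    (hinit : h (x 0) ≥ 0) :
    ∀ t, h (x t) ≥ 0 :=
  nonneg_of_sub_le_succ (fun _ => le_self_of_lt_self_of_map_zero hα0 hαlt)
    (a := fun t => h (x t)) (fun t => by linarith [hsat t]) hinit

/-- Discrete-time CBF invariance theorem: if `h` is a discrete-time CBF for the
system `x(t+1) = f(x(t), u(t))` with class-K function `α` satisfying `α s < s`
for `s > 0`, then the safe set `{x | h x ≥ 0}` is forward invariant along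
trajectories satisfying the CBF condition. -/
theorem stmt_0 {X U : Type*} (f : X → U → X) (h : X → ℝ) (α : ℝ → ℝ)
    (hαc : Continuous α) (hαm : StrictMono α) (hα0 : α 0 = 0)
    (hαlt : ∀ s > (0:ℝ), α s < s)
    (hCBF : ∀ x : X, ∃ u : U, h (f x u) - h x ≥ -α (h x))
    (x : ℕ → X) (u : ℕ → U)
    (hdyn : ∀ t, x (t + 1) = f (x t) (u t))
    (hsat : ∀ t, h (x (t + 1)) - h (x t) ≥ -α (h (x t)))
    (hinit : h (x 0) ≥ 0) :
    ∀ t, h (x t) ≥ 0 :=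
  stmt_0_general h α hα0 hαlt x hsat hinit
end

section
/- Let h : X → ℝ be of relative degree 2 for the discrete-time system x(t+1)=f(x(t),u(t)). Define ψ₀(x)=h(x), ψ₁(x(t))=ψ₀(x(t+1))-ψ₀(x(t))+α₁(ψ₀(x(t))) and ψ₂(x(t),u(t))=ψ₁(x(t+1))-ψ₁(x(t))+α₂(ψ₁(x(t))), where α₁,α₂ are class-K functions with αⱼ(s)<s for s>0. If for every x(t) ∈ S₀ ∩ S₁ there exists an admissible input u(t) with ψ₂(x(t),u(t)) ≥ 0, where Sⱼ={x : ψⱼ(x) ≥ 0}, then S₀ ∩ S₁ is forward invariant. -/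
/-!
Each barrier condition is a one-step comparison: if `b ≥ 0` and `b' - b + α b ≥ 0`, then
`b' ≥ b - α b ≥ 0` because `α b ≤ b` on `[0, ∞)`. Along the trajectory, `ψ₂ ≥ 0` at time `t`
therefore propagates `ψ₁ ≥ 0` to time `t + 1`, and `ψ₁ ≥ 0` (which, by relative degree 2, is
the barrier condition for `h` whatever the input) propagates `h ≥ 0`; induction on `t` concludes.
-/

lemma le_self_of_forall_pos_lt {G : Type*} [Zero G] [PartialOrder G] {α : G → G}
    (hα0 : α 0 = 0) (hαlt : ∀ s > 0, α s < s) {s : G} (hs : 0 ≤ s) : α s ≤ s := by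
  rcases hs.lt_or_eq with hpos | rfl
  · exact (hαlt s hpos).le
  · exact hα0.le

lemma nonneg_of_barrier_step {G : Type*} [AddCommGroup G] [PartialOrder G]
    [IsOrderedAddMonoid G] {α : G → G} (hα0 : α 0 = 0) (hαlt : ∀ s > 0, α s < s) {b b' : G}
    (hb : 0 ≤ b) (hstep : 0 ≤ b' - b + α b) : 0 ≤ b' := by
  have hαb : α b ≤ b := le_self_of_forall_pos_lt hα0 hαlt hb
  calc (0 : G) ≤ b' - b + α b := hstep
    _ ≤ b' - b + b := by gcongr
    _ = b' := sub_add_cancel b' b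

theorem stmt_1_general {X U : Type*} (f : X → U → X) (h : X → ℝ)
    (α₁ α₂ : ℝ → ℝ)
    (hα₁0 : α₁ 0 = 0)
    (hα₁lt : ∀ s > (0:ℝ), α₁ s < s)
    (hα₂0 : α₂ 0 = 0)
    (hα₂lt : ∀ s > (0:ℝ), α₂ s < s)
    -- relative degree 2: `h ∘ f` does not depend on the input
    (hnext : X → ℝ) (hrel : ∀ x u, h (f x u) = hnext x)
    (ψ₁ : X → ℝ) (hψ₁ : ∀ x, ψ₁ x = hnext x - h x + α₁ (h x))
    (ψ₂ : X → U → ℝ) (hψ₂ : ∀ x u, ψ₂ x u = ψ₁ (f x u) - ψ₁ x + α₂ (ψ₁ x))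
    (x : ℕ → X) (u : ℕ → U)
    (hdyn : ∀ t, x (t + 1) = f (x t) (u t))
    (hsat : ∀ t, h (x t) ≥ 0 → ψ₁ (x t) ≥ 0 → ψ₂ (x t) (u t) ≥ 0)
    (hinit : h (x 0) ≥ 0 ∧ ψ₁ (x 0) ≥ 0) :
    ∀ t, h (x t) ≥ 0 ∧ ψ₁ (x t) ≥ 0 := by
  intro t
  induction t with
  | zero => exact hinit
  | succ t ih =>
    obtain ⟨h_nonneg, ψ₁_nonneg⟩ := ih
    have h_step : 0 ≤ h (x (t + 1)) - h (x t) + α₁ (h (x t)) := by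
      rw [hdyn, hrel, ← hψ₁]
      exact ψ₁_nonneg
    have ψ₁_step : 0 ≤ ψ₁ (x (t + 1)) - ψ₁ (x t) + α₂ (ψ₁ (x t)) := by
      rw [hdyn, ← hψ₂]
      exact hsat t h_nonneg ψ₁_nonneg
    exact ⟨nonneg_of_barrier_step hα₁0 hα₁lt h_nonneg h_step,
      nonneg_of_barrier_step hα₂0 hα₂lt ψ₁_nonneg ψ₁_step⟩

/-- Discrete-time HOCBF theorem for relative degree 2: if for every state in
`S₀ ∩ S₁` there exists an admissible input with `ψ₂ ≥ 0`, then `S₀ ∩ S₁` is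
forward invariant along trajectories satisfying the HOCBF condition. -/
theorem stmt_1 {X U : Type*} (f : X → U → X) (h : X → ℝ)
    (α₁ α₂ : ℝ → ℝ)
    (hα₁c : Continuous α₁) (hα₁m : StrictMono α₁) (hα₁0 : α₁ 0 = 0)
    (hα₁lt : ∀ s > (0:ℝ), α₁ s < s)
    (hα₂c : Continuous α₂) (hα₂m : StrictMono α₂) (hα₂0 : α₂ 0 = 0)
    (hα₂lt : ∀ s > (0:ℝ), α₂ s < s)
    -- relative degree 2: `h ∘ f` does not depend on the input
    (hnext : X → ℝ) (hrel : ∀ x u, h (f x u) = hnext x)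
    (ψ₁ : X → ℝ) (hψ₁ : ∀ x, ψ₁ x = hnext x - h x + α₁ (h x))
    (ψ₂ : X → U → ℝ) (hψ₂ : ∀ x u, ψ₂ x u = ψ₁ (f x u) - ψ₁ x + α₂ (ψ₁ x))
    (hcond : ∀ x : X, h x ≥ 0 → ψ₁ x ≥ 0 → ∃ u : U, ψ₂ x u ≥ 0)
    (x : ℕ → X) (u : ℕ → U)
    (hdyn : ∀ t, x (t + 1) = f (x t) (u t))
    (hsat : ∀ t, h (x t) ≥ 0 → ψ₁ (x t) ≥ 0 → ψ₂ (x t) (u t) ≥ 0)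
    (hinit : h (x 0) ≥ 0 ∧ ψ₁ (x 0) ≥ 0) :
    ∀ t, h (x t) ≥ 0 ∧ ψ₁ (x t) ≥ 0 :=
  stmt_1_general f h α₁ α₂ hα₁0 hα₁lt hα₂0 hα₂lt hnext hrel ψ₁ hψ₁ ψ₂ hψ₂ x u hdyn hsat hinit
end

section
/- For the general higher-order construction ψ₀=h, ψⱼ(x(t))=ψⱼ₋₁(x(t+1))-ψⱼ₋₁(x(t))+αⱼ(ψⱼ₋₁(x(t))) for j=1,…,r with class-K functions αⱼ satisfying αⱼ(s)<s for s>0, if ψᵣ(x(t),u(t)) ≥ 0 holds along a trajectory whenever x(t) ∈ ⋂_{j=0}^{r-1} Sⱼ, then the intersection ⋂_{j=0}^{r-1} Sⱼ (with Sⱼ={x: ψⱼ(x) ≥ 0}) is forward invariant for the discrete-time system. -/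
/-!
If `ψⱼ(t) ≥ 0` and `ψⱼ₊₁(t) ≥ 0`, then
`ψⱼ(t+1) = ψⱼ₊₁(t) + (ψⱼ(t) - αⱼ₊₁(ψⱼ(t))) ≥ 0`, because `α(s) ≤ s` for `s ≥ 0`.
At time `t` every level `j < r` is nonnegative by induction, and so is the top level `ψᵣ` by the
control condition; hence all levels `j < r` stay nonnegative at time `t + 1`.
-/

theorem apply_le_self_of_nonneg {α : ℝ → ℝ} (hα0 : α 0 = 0) (hαlt : ∀ s > (0 : ℝ), α s < s)
    {s : ℝ} (hs : 0 ≤ s) : α s ≤ s := by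
  rcases hs.eq_or_lt with rfl | hpos
  · exact hα0.le
  · exact (hαlt s hpos).le

theorem nonneg_of_sub_add_nonneg {α : ℝ → ℝ} (hα0 : α 0 = 0) (hαlt : ∀ s > (0 : ℝ), α s < s)
    {a a' : ℝ} (ha : 0 ≤ a) (hstep : 0 ≤ a' - a + α a) : 0 ≤ a' := by
  linarith [apply_le_self_of_nonneg hα0 hαlt ha]

theorem stmt_2_general (r : ℕ) (α : ℕ → ℝ → ℝ)
    (hα0 : ∀ j, α j 0 = 0) (hαlt : ∀ j, ∀ s > (0:ℝ), α j s < s)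
    (Ψ : ℕ → ℕ → ℝ)
    (hrec : ∀ j < r, ∀ t, Ψ (j + 1) t = Ψ j (t + 1) - Ψ j t + α (j + 1) (Ψ j t))
    (hsat : ∀ t, (∀ j < r, Ψ j t ≥ 0) → Ψ r t ≥ 0)
    (hinit : ∀ j < r, Ψ j 0 ≥ 0) :
    ∀ t, ∀ j < r, Ψ j t ≥ 0 := by
  intro t
  induction t with
  | zero => exact hinit
  | succ t ih =>
    intro j hj
    have hnext : 0 ≤ Ψ (j + 1) t := by
      rcases (Nat.succ_le_of_lt hj).lt_or_eq with hlt | rfl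
      · exact ih (j + 1) hlt
      · exact hsat t ih
    exact nonneg_of_sub_add_nonneg (hα0 (j + 1)) (hαlt (j + 1)) (ih j hj) (hrec j hj t ▸ hnext)

/-- Discrete-time HOCBF theorem for arbitrary relative degree `r ≥ 1`:
along a trajectory of `x(t+1) = f(x(t), u(t))`, if `ψᵣ(t) ≥ 0` whenever
`x(t) ∈ ⋂_{j<r} Sⱼ`, then the intersection of the sets `Sⱼ = {ψⱼ ≥ 0}` is
forward invariant. -/
theorem stmt_2 {X U : Type*} (f : X → U → X) (h : X → ℝ)
    (r : ℕ) (hr : 1 ≤ r) (α : ℕ → ℝ → ℝ)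
    (hαc : ∀ j, Continuous (α j)) (hαm : ∀ j, StrictMono (α j))
    (hα0 : ∀ j, α j 0 = 0) (hαlt : ∀ j, ∀ s > (0:ℝ), α j s < s)
    (x : ℕ → X) (u : ℕ → U)
    (hdyn : ∀ t, x (t + 1) = f (x t) (u t))
    (Ψ : ℕ → ℕ → ℝ)
    (hΨ0 : ∀ t, Ψ 0 t = h (x t))
    (hrec : ∀ j < r, ∀ t, Ψ (j + 1) t = Ψ j (t + 1) - Ψ j t + α (j + 1) (Ψ j t))
    (hsat : ∀ t, (∀ j < r, Ψ j t ≥ 0) → Ψ r t ≥ 0)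
    (hinit : ∀ j < r, Ψ j 0 ≥ 0) :
    ∀ t, ∀ j < r, Ψ j t ≥ 0 :=
  stmt_2_general r α hα0 hαlt Ψ hrec hsat hinit
end
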